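/- arXiv:2208.01450 — 2 statements merged into one kernel-verified Lean document; each statement's English description precedes it below -/
import Mathlib

section
/- Let f be a data map and s = (Γ, Δ) a sequent with (Γ, Δ) ≠ (∅, ∅). Then I_s(ℱ'(f)) = {t ∈ [0,1] : t(s,f) ≤ t < u_s}, where u_s = min{t(s',f) : s' ⪯ s, s' ≠ s}. In particular, whenever I_s(ℱ'(f)) is nonempty it is a half-open interval [t(s,f), u_s) with left endpoint t(s,f) (the birth time) and right endpoint u_s (the death time). -/
/-!
Membership of a sequent in `𝒮'_t(f)` is the closed condition `(1 - t) q ≤ p`, monotone in `t` and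
true at `t = 1`, so for `t ∈ [0,1]` it says exactly `t(s,f) ≤ t`. The sequent `s` is then minimal
at time `t` iff it is born and none of its finitely many proper predecessors is, i.e. iff
`t(s,f) ≤ t < min {t(s',f) : s' < s}`; the predecessor `(∅, ∅)` makes this minimum nonempty.
-/

open MeasureTheory Set

/-- `q_f(s)`: the measure of the intersection `⋂_{a ∈ Γ} f(a)` (empty intersection = `X`). -/
noncomputable def qOf {A B X : Type*} [MeasurableSpace X] (μ : Measure X)
    (f : A ⊕ B → Set X) (Γ : Finset A) : ℝ :=
  (μ (⋂ a ∈ Γ, f (Sum.inl a))).toReal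

/-- `p_f(s)`: the measure of `⋂_{a ∈ Γ} f(a) ∩ ⋃_{x ∈ Δ} f(x)` (empty union = `∅`). -/
noncomputable def pOf {A B X : Type*} [MeasurableSpace X] (μ : Measure X)
    (f : A ⊕ B → Set X) (s : Finset A × Finset B) : ℝ :=
  (μ ((⋂ a ∈ s.1, f (Sum.inl a)) ∩ ⋃ x ∈ s.2, f (Sum.inr x))).toReal

/-- Membership of the sequent `s` in the poset `𝒮'_t(f)` of Filtration I:
`s ∈ 𝒮'_t(f)` iff `p_f(s) ≥ (1 − t) · q_f(s)`. -/
def memFiltI {A B X : Type*} [MeasurableSpace X] (μ : Measure X)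
    (f : A ⊕ B → Set X) (t : ℝ) (s : Finset A × Finset B) : Prop :=
  pOf μ f s ≥ (1 - t) * qOf μ f s.1

/-- The birth time `t(s,f) = inf {t ∈ [0,1] : s ∈ 𝒮'_t(f)}`. -/
noncomputable def birthTime {A B X : Type*} [MeasurableSpace X] (μ : Measure X)
    (f : A ⊕ B → Set X) (s : Finset A × Finset B) : ℝ :=
  sInf {t : ℝ | t ∈ Icc (0:ℝ) 1 ∧ memFiltI μ f t s}

/-- `p` is a minimal element of the subset `Q` of a poset. -/
def IsMinimalIn {P : Type*} [PartialOrder P] (Q : Set P) (p : P) : Prop :=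
  p ∈ Q ∧ ∀ q ∈ Q, q ≤ p → q = p

theorem isMinimalIn_setOf_le_iff {P : Type*} [PartialOrder P] (b : P → ℝ) {p : P} (t : ℝ)
    (hfin : {q | q ≤ p ∧ q ≠ p}.Finite) (hne : {q | q ≤ p ∧ q ≠ p}.Nonempty) :
    IsMinimalIn {q | b q ≤ t} p ↔ b p ≤ t ∧ t < sInf (b '' {q | q ≤ p ∧ q ≠ p}) := by
  rw [(hfin.image b).lt_csInf_iff (hne.image b), forall_mem_image, IsMinimalIn]
  refine and_congr_right fun _ => forall_congr' fun q => ?_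
  simp only [mem_ofPred_eq, and_imp]
  constructor
  · intro h hle hne
    exact lt_of_not_ge fun hq => hne (h hq hle)
  · intro h hq hle
    by_contra hne
    exact (h hle hne).not_ge hq

section FiltrationI

variable {A B X : Type*} [MeasurableSpace X] (μ : Measure X) (f : A ⊕ B → Set X)

theorem memFiltI_of_le {t t' : ℝ} (h : t ≤ t') {s : Finset A × Finset B}
    (hs : memFiltI μ f t s) : memFiltI μ f t' s := by
  have hq : 0 ≤ qOf μ f s.1 := ENNReal.toReal_nonneg
  unfold memFiltI at *
  nlinarith

theorem memFiltI_one (s : Finset A × Finset B) : memFiltI μ f 1 s := by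
  simp [memFiltI, pOf]

theorem isClosed_setOf_memFiltI (s : Finset A × Finset B) :
    IsClosed {t : ℝ | memFiltI μ f t s} :=
  isClosed_le (by fun_prop) continuous_const

theorem memFiltI_iff_birthTime_le (s : Finset A × Finset B) {t : ℝ} (ht : t ∈ Icc (0:ℝ) 1) :
    memFiltI μ f t s ↔ birthTime μ f s ≤ t := by
  have hbdd : BddBelow {t : ℝ | t ∈ Icc (0:ℝ) 1 ∧ memFiltI μ f t s} := ⟨0, fun _ h => h.1.1⟩
  refine ⟨fun h => csInf_le hbdd ⟨ht, h⟩, fun h => memFiltI_of_le μ f h ?_⟩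
  have hne : {t : ℝ | t ∈ Icc (0:ℝ) 1 ∧ memFiltI μ f t s}.Nonempty :=
    ⟨1, right_mem_Icc.2 zero_le_one, memFiltI_one μ f s⟩
  exact ((isClosed_Icc.inter (isClosed_setOf_memFiltI μ f s)).csInf_mem hne hbdd).2

end FiltrationI

theorem bar_filtI_eq_Ico_general {A B X : Type*} [MeasurableSpace X]
    (μ : Measure X) (f : A ⊕ B → Set X)
    (s : Finset A × Finset B) (hs : s ≠ (∅, ∅)) :
    {t : ℝ | t ∈ Icc (0:ℝ) 1 ∧
        IsMinimalIn {s' : Finset A × Finset B | memFiltI μ f t s'} s} =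
      Icc (0:ℝ) 1 ∩
        Ico (birthTime μ f s)
          (sInf (birthTime μ f '' {s' : Finset A × Finset B | s' ≤ s ∧ s' ≠ s})) := by
  classical
  have hfin : {s' : Finset A × Finset B | s' ≤ s ∧ s' ≠ s}.Finite :=
    (finite_Iic s).subset fun _ h => h.1
  have hne : {s' : Finset A × Finset B | s' ≤ s ∧ s' ≠ s}.Nonempty :=
    ⟨(∅, ∅), ⟨Finset.empty_subset _, Finset.empty_subset _⟩, hs.symm⟩
  ext t
  refine and_congr_right fun ht => ?_
  have hslice : {s' | memFiltI μ f t s'} = {s' | birthTime μ f s' ≤ t} :=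
    ext fun s' => memFiltI_iff_birthTime_le μ f s' ht
  rw [hslice, isMinimalIn_setOf_le_iff _ t hfin hne]
  rfl

/-- For a sequent `s ≠ (∅, ∅)`, the bar `I_s(ℱ'(f)) = {t ∈ [0,1] : p ∈ Min(𝒮'_t(f))}`
equals `{t ∈ [0,1] : t(s,f) ≤ t < u_s}` where
`u_s = min {t(s',f) : s' ⪯ s, s' ≠ s}`; in particular, whenever nonempty, it is the
half-open interval `[t(s,f), u_s)` intersected with `[0,1]`. -/
theorem bar_filtI_eq_Ico {A B X : Type*} [Fintype A] [Fintype B] [MeasurableSpace X]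
    (μ : Measure X) [IsProbabilityMeasure μ] (f : A ⊕ B → Set X)
    (hf : ∀ v, MeasurableSet (f v)) (s : Finset A × Finset B) (hs : s ≠ (∅, ∅)) :
    {t : ℝ | t ∈ Icc (0:ℝ) 1 ∧
        IsMinimalIn {s' : Finset A × Finset B | memFiltI μ f t s'} s} =
      Icc (0:ℝ) 1 ∩
        Ico (birthTime μ f s)
          (sInf (birthTime μ f '' {s' : Finset A × Finset B | s' ≤ s ∧ s' ≠ s})) :=
  bar_filtI_eq_Ico_general μ f s hs
end

section
/- Let 0 < ε ≤ 1 and 0 < δ ≤ 1, let f and f' be two ε-granular data maps, and let s = (Γ, Δ) be a sequent satisfying the δ-condition under both f and f'. Then |t(s,f) − t(s,f')| ≤ (2/(δ·ε)) · data-dist(f, f'). -/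
open MeasureTheory Set

/-- The distance between two data maps:
`data-dist(f,f') = Σ_{v ∈ V_A ∪ V_S} m(f(v) Δ f'(v))`. -/
noncomputable def dataDist {A B X : Type*} [Fintype A] [Fintype B] [MeasurableSpace X]
    (μ : Measure X) (f f' : A ⊕ B → Set X) : ℝ :=
  ∑ v : A ⊕ B, (μ (symmDiff (f v) (f' v))).toReal

/-- A data map `f` is `ε`-granular if `m(f(v)) > ε` for every variable `v`. -/
def Granular {A B X : Type*} [MeasurableSpace X] (μ : Measure X)
    (f : A ⊕ B → Set X) (ε : ℝ) : Prop :=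
  ∀ v : A ⊕ B, ε < (μ (f v)).toReal

/-- The sequent `s = (Γ, Δ)` satisfies the `δ`-condition under `f`:
`m(⋂_{b ∈ Γ} f(b)) > δ · m(f(a))` for every `a ∈ Γ`. -/
def DeltaCond {A B X : Type*} [MeasurableSpace X] (μ : Measure X)
    (f : A ⊕ B → Set X) (δ : ℝ) (s : Finset A × Finset B) : Prop :=
  ∀ a ∈ s.1, δ * (μ (f (Sum.inl a))).toReal < qOf μ f s.1

open scoped symmDiff

/-!
For `q > 0` the admissible times form the interval `[1 - p/q, 1]`, so the birth time is
`1 - p/q`. Both `p` and `q` are measures of sets built from the data map, and these sets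
change only on `⋃ v, f v ∆ f' v`, so `p` and `q` move by at most `data-dist(f, f')`.
The `δ`-condition and granularity keep `q ≥ δε` away from zero, and the ratio `p/q` is
Lipschitz there: `|p/q - p'/q'| ≤ (|p - p'| + |q - q'|)/q'` when `0 ≤ p ≤ q`.
-/

lemma abs_div_sub_div_le {p q p' q' : ℝ} (hp : 0 ≤ p) (hpq : p ≤ q) (hq : 0 < q)
    (hq' : 0 < q') : |p / q - p' / q'| ≤ (|p - p'| + |q - q'|) / q' := by
  have hnum : |p * q' - q * p'| ≤ q * (|p - p'| + |q - q'|) := by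
    have hsplit : p * q' - q * p' = (p - p') * q - p * (q - q') := by ring
    calc |p * q' - q * p'| ≤ |p - p'| * q + p * |q - q'| := by
          rw [hsplit]
          refine (abs_sub _ _).trans (add_le_add ?_ ?_) <;>
            simp [abs_mul, abs_of_pos hq, abs_of_nonneg hp]
      _ ≤ q * (|p - p'| + |q - q'|) := by nlinarith [abs_nonneg (q - q')]
  rw [div_sub_div _ _ hq.ne' hq'.ne', abs_div, abs_of_pos (mul_pos hq hq'),
    div_le_div_iff₀ (mul_pos hq hq') hq']
  calc |p * q' - q * p'| * q' ≤ q * (|p - p'| + |q - q'|) * q' := by gcongr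
    _ = (|p - p'| + |q - q'|) * (q * q') := by ring

lemma measureReal_sub_le_measureReal_symmDiff {X : Type*} [MeasurableSpace X]
    (μ : Measure X) [IsFiniteMeasure μ] (s t : Set X) :
    μ.real s - μ.real t ≤ μ.real (s ∆ t) := by
  rw [sub_le_iff_le_add, measureReal_def, measureReal_def, measureReal_def,
    ← ENNReal.toReal_add (measure_ne_top _ _) (measure_ne_top _ _)]
  exact ENNReal.toReal_mono (by finiteness) (tsub_le_iff_right.1 le_measure_symmDiff)

section DataMap

variable {A B X : Type*}

lemma mem_iff_mem_of_notMem_iUnion_symmDiff {f f' : A ⊕ B → Set X} {x : X}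
    (hx : x ∉ ⋃ v, f v ∆ f' v) (v : A ⊕ B) : x ∈ f v ↔ x ∈ f' v := by
  simp only [mem_iUnion, not_exists, mem_symmDiff] at hx
  have := hx v
  tauto

lemma biInter_symmDiff_biInter_subset (f f' : A ⊕ B → Set X) (Γ : Finset A) :
    (⋂ a ∈ Γ, f (Sum.inl a)) ∆ (⋂ a ∈ Γ, f' (Sum.inl a)) ⊆ ⋃ v, f v ∆ f' v := by
  intro x hx
  by_contra h
  simp only [mem_symmDiff, mem_iInter, mem_iff_mem_of_notMem_iUnion_symmDiff h, and_not_self,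
    or_self] at hx

lemma sequentSet_symmDiff_subset (f f' : A ⊕ B → Set X) (s : Finset A × Finset B) :
    ((⋂ a ∈ s.1, f (Sum.inl a)) ∩ ⋃ b ∈ s.2, f (Sum.inr b)) ∆
      ((⋂ a ∈ s.1, f' (Sum.inl a)) ∩ ⋃ b ∈ s.2, f' (Sum.inr b)) ⊆ ⋃ v, f v ∆ f' v := by
  intro x hx
  by_contra h
  simp only [mem_symmDiff, mem_inter_iff, mem_iInter, mem_iUnion,
    mem_iff_mem_of_notMem_iUnion_symmDiff h, and_not_self, or_self] at hx

variable [MeasurableSpace X] (μ : Measure X)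

lemma pOf_le_qOf [IsFiniteMeasure μ] (f : A ⊕ B → Set X) (s : Finset A × Finset B) :
    pOf μ f s ≤ qOf μ f s.1 :=
  ENNReal.toReal_mono (measure_ne_top _ _) (measure_mono inter_subset_left)

lemma birthTime_eq_one_sub_div (f : A ⊕ B → Set X) (s : Finset A × Finset B)
    (hq : 0 < qOf μ f s.1) (hpq : pOf μ f s ≤ qOf μ f s.1) :
    birthTime μ f s = 1 - pOf μ f s / qOf μ f s.1 := by
  have hratio : pOf μ f s / qOf μ f s.1 ≤ 1 := (div_le_one hq).2 hpq
  have hratio0 : 0 ≤ pOf μ f s / qOf μ f s.1 := div_nonneg ENNReal.toReal_nonneg hq.le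
  have hset : {t : ℝ | t ∈ Icc (0 : ℝ) 1 ∧ memFiltI μ f t s}
      = Icc (1 - pOf μ f s / qOf μ f s.1) 1 := by
    ext t
    simp only [mem_ofPred_eq, mem_Icc, memFiltI, ge_iff_le, ← le_div_iff₀ hq]
    constructor
    · rintro ⟨⟨-, ht1⟩, hm⟩
      exact ⟨by linarith, ht1⟩
    · rintro ⟨hl, ht1⟩
      exact ⟨⟨by linarith, ht1⟩, by linarith⟩
  rw [birthTime, hset, csInf_Icc (by linarith)]

lemma mul_le_qOf [IsProbabilityMeasure μ] {f : A ⊕ B → Set X} {ε δ : ℝ}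
    (hε0 : 0 ≤ ε) (hε1 : ε ≤ 1) (hδ0 : 0 ≤ δ) (hδ1 : δ ≤ 1)
    (hgran : Granular μ f ε) {s : Finset A × Finset B} (hδf : DeltaCond μ f δ s) :
    δ * ε ≤ qOf μ f s.1 := by
  rcases s.1.eq_empty_or_nonempty with hΓ | ⟨a, ha⟩
  · have hq : qOf μ f s.1 = 1 := by simp [qOf, hΓ]
    rw [hq]
    nlinarith
  · calc δ * ε ≤ δ * (μ (f (Sum.inl a))).toReal :=
          mul_le_mul_of_nonneg_left (hgran _).le hδ0
      _ ≤ qOf μ f s.1 := (hδf a ha).le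

variable [Fintype A] [Fintype B] [IsFiniteMeasure μ]

lemma abs_measureReal_sub_le_dataDist {f f' : A ⊕ B → Set X} {S S' : Set X}
    (h : S ∆ S' ⊆ ⋃ v, f v ∆ f' v) : |μ.real S - μ.real S'| ≤ dataDist μ f f' := by
  have hsymm : μ.real (S ∆ S') ≤ dataDist μ f f' :=
    (measureReal_mono h).trans (measureReal_iUnion_fintype_le _)
  refine abs_sub_le_iff.2 ⟨?_, ?_⟩
  · exact (measureReal_sub_le_measureReal_symmDiff μ S S').trans hsymm
  · rw [symmDiff_comm] at hsymm
    exact (measureReal_sub_le_measureReal_symmDiff μ S' S).trans hsymm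

lemma abs_qOf_sub_qOf_le_dataDist (f f' : A ⊕ B → Set X) (Γ : Finset A) :
    |qOf μ f Γ - qOf μ f' Γ| ≤ dataDist μ f f' :=
  abs_measureReal_sub_le_dataDist μ (biInter_symmDiff_biInter_subset f f' Γ)

lemma abs_pOf_sub_pOf_le_dataDist (f f' : A ⊕ B → Set X) (s : Finset A × Finset B) :
    |pOf μ f s - pOf μ f' s| ≤ dataDist μ f f' :=
  abs_measureReal_sub_le_dataDist μ (sequentSet_symmDiff_subset f f' s)

end DataMap

theorem abs_birthTime_sub_birthTime_le_general {A B X : Type*} [Fintype A] [Fintype B]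
    [MeasurableSpace X] (μ : Measure X) [IsProbabilityMeasure μ]
    (ε δ : ℝ) (hε0 : 0 < ε) (hε1 : ε ≤ 1) (hδ0 : 0 < δ) (hδ1 : δ ≤ 1)
    (f f' : A ⊕ B → Set X)
    (hgran : Granular μ f ε) (hgran' : Granular μ f' ε)
    (s : Finset A × Finset B) (hδf : DeltaCond μ f δ s) (hδf' : DeltaCond μ f' δ s) :
    |birthTime μ f s - birthTime μ f' s| ≤ (2 / (δ * ε)) * dataDist μ f f' := by
  have hδε : 0 < δ * ε := mul_pos hδ0 hε0
  have hq := mul_le_qOf μ hε0.le hε1 hδ0.le hδ1 hgran hδf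
  have hq' := mul_le_qOf μ hε0.le hε1 hδ0.le hδ1 hgran' hδf'
  have hp := abs_pOf_sub_pOf_le_dataDist μ f f' s
  have hqq := abs_qOf_sub_qOf_le_dataDist μ f f' s.1
  have hD : 0 ≤ dataDist μ f f' := (abs_nonneg _).trans hp
  rw [birthTime_eq_one_sub_div μ f s (hδε.trans_le hq) (pOf_le_qOf μ f s),
    birthTime_eq_one_sub_div μ f' s (hδε.trans_le hq') (pOf_le_qOf μ f' s),
    sub_sub_sub_cancel_left, abs_sub_comm]
  calc |pOf μ f s / qOf μ f s.1 - pOf μ f' s / qOf μ f' s.1|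
      ≤ (|pOf μ f s - pOf μ f' s| + |qOf μ f s.1 - qOf μ f' s.1|) / qOf μ f' s.1 :=
        abs_div_sub_div_le ENNReal.toReal_nonneg (pOf_le_qOf μ f s)
          (hδε.trans_le hq) (hδε.trans_le hq')
    _ ≤ (dataDist μ f f' + dataDist μ f f') / (δ * ε) :=
        div_le_div₀ (add_nonneg hD hD) (add_le_add hp hqq) hδε hq'
    _ = 2 / (δ * ε) * dataDist μ f f' := by ring

/-- Stability lemma with explicit constant: for `ε`-granular data maps `f, f'` and a sequent
`s` satisfying the `δ`-condition under both, the birth times differ by at most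
`(2/(δ·ε)) · data-dist(f,f')`. -/
theorem abs_birthTime_sub_birthTime_le {A B X : Type*} [Fintype A] [Fintype B]
    [MeasurableSpace X] (μ : Measure X) [IsProbabilityMeasure μ]
    (ε δ : ℝ) (hε0 : 0 < ε) (hε1 : ε ≤ 1) (hδ0 : 0 < δ) (hδ1 : δ ≤ 1)
    (f f' : A ⊕ B → Set X)
    (hf : ∀ v, MeasurableSet (f v)) (hf' : ∀ v, MeasurableSet (f' v))
    (hgran : Granular μ f ε) (hgran' : Granular μ f' ε)
    (s : Finset A × Finset B) (hδf : DeltaCond μ f δ s) (hδf' : DeltaCond μ f' δ s) :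
    |birthTime μ f s - birthTime μ f' s| ≤ (2 / (δ * ε)) * dataDist μ f f' :=
  abs_birthTime_sub_birthTime_le_general μ ε δ hε0 hε1 hδ0 hδ1 f f' hgran hgran' s hδf hδf'
end
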